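/- Let F be an involutive symmetry on V⊗V, and let h ↦ R_h be a family of operators on V⊗V, defined for h in a neighborhood of 0 in ℂ, such that: each R_h is a Hecke symmetry with parameter q = e^h compatible with F (for h ≠ 0), R_0 = F, and there exist operators r, s on V⊗V with R_h∘F = I + h·r + h²·s + o(h²) as h → 0. Then the constant braided r-matrix r satisfies: (i) r + F·r·F = 2F; and (ii) the braided classical Yang–Baxter equation on V^{⊗3}: [r_{\bar{1}\bar{2}}, r_{\bar{1}\bar{3}}] + [r_{\bar{1}\bar{2}}, r_{\bar{2}\bar{3}}] + [r_{\bar{1}\bar{3}}, r_{\bar{2}\bar{3}}] = 0, where r_{\bar{1}\bar{2}} = r₁₂, r_{\bar{1}\bar{3}} = F₂₃r₁₂F₂₃, r_{\bar{2}\bar{3}} = F₁₂F₂₃r₁₂F₂₃F₁₂. -/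

import Mathlib

open Matrix BigOperators

noncomputable section

/-- Operators on `V ⊗ V`, `V = ℂ^N`, identified with their matrices. -/
abbrev Op2 (N : ℕ) := Matrix (Fin N × Fin N) (Fin N × Fin N) ℂ

/-- Operators on `V^{⊗n}`. -/
abbrev OpN (n N : ℕ) := Matrix (Fin n → Fin N) (Fin n → Fin N) ℂ

/-- Placement `B_{m+1, m+2}` (1-indexed), i.e. a two-leg operator `B` acting on the adjacent
legs `m, m+1` (0-indexed) of `V^{⊗n}`, identity elsewhere. -/
def adjPlace (n N : ℕ) (B : Op2 N) (m : ℕ) : OpN n N :=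
  if h : m + 1 < n then
    Matrix.of fun x y =>
      B (x ⟨m, Nat.lt_of_succ_lt h⟩, x ⟨m + 1, h⟩) (y ⟨m, Nat.lt_of_succ_lt h⟩, y ⟨m + 1, h⟩) *
        ∏ j : Fin n, if (j : ℕ) = m ∨ (j : ℕ) = m + 1 then 1 else (if x j = y j then 1 else 0)
  else 1

/-- `F_{k-1,k} ⋯ F_{1,2}` (1-indexed positions; empty product for `k ≤ 1`). -/
def chainC (n N : ℕ) (F : Op2 N) (k : ℕ) : OpN n N :=
  ((List.range (k - 1)).reverse.map (adjPlace n N F)).prod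

/-- `F_{l-1,l} ⋯ F_{2,3}` (1-indexed positions; empty product for `l ≤ 2`). -/
def chainD (n N : ℕ) (F : Op2 N) (l : ℕ) : OpN n N :=
  ((List.range' 1 (l - 2)).reverse.map (adjPlace n N F)).prod

/-- `F_{1,2}⁻¹ ⋯ F_{k-1,k}⁻¹` (built from a given inverse `Finv` of `F`). -/
def chainCInv (n N : ℕ) (Finv : Op2 N) (k : ℕ) : OpN n N :=
  ((List.range (k - 1)).map (adjPlace n N Finv)).prod

/-- `F_{2,3}⁻¹ ⋯ F_{l-1,l}⁻¹`. -/
def chainDInv (n N : ℕ) (Finv : Op2 N) (l : ℕ) : OpN n N :=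
  ((List.range' 1 (l - 2)).map (adjPlace n N Finv)).prod

/-- The `F`-shifted placement
`B_{\bar k \bar l} = (F_{k−1,k}⋯F_{1,2})(F_{l−1,l}⋯F_{2,3}) B₁₂ (F_{2,3}⁻¹⋯F_{l−1,l}⁻¹)(F_{1,2}⁻¹⋯F_{k−1,k}⁻¹)`
for distinct 1-indexed positions `k, l`. -/
def bar2 (n N : ℕ) (F Finv B : Op2 N) (k l : ℕ) : OpN n N :=
  chainC n N F k * chainD n N F l * adjPlace n N B 0 * chainDInv n N Finv l * chainCInv n N Finv k

namespace Stmt7Aux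

open Kronecker Filter

variable {N : ℕ}

def e0 (N : ℕ) : (Fin 3 → Fin N) ≃ (Fin N × Fin N) × Fin N where
  toFun x := ((x 0, x 1), x 2)
  invFun p := ![p.1.1, p.1.2, p.2]
  left_inv x := by funext j; fin_cases j <;> rfl
  right_inv p := rfl

def e1 (N : ℕ) : (Fin 3 → Fin N) ≃ Fin N × (Fin N × Fin N) where
  toFun x := (x 0, (x 1, x 2))
  invFun p := ![p.1, p.2.1, p.2.2]
  left_inv x := by funext j; fin_cases j <;> rfl
  right_inv p := rfl

lemma adj0_eq (B : Op2 N) :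
    adjPlace 3 N B 0 = ((B ⊗ₖ (1 : Matrix (Fin N) (Fin N) ℂ)).submatrix (e0 N) (e0 N)) := by
  ext x y
  simp [adjPlace, e0, Fin.prod_univ_three, Matrix.one_apply, Equiv.coe_fn_mk]
  rfl

lemma adj1_eq (B : Op2 N) :
    adjPlace 3 N B 1 = (((1 : Matrix (Fin N) (Fin N) ℂ) ⊗ₖ B).submatrix (e1 N) (e1 N)) := by
  ext x y
  simp [adjPlace, e1, Fin.prod_univ_three, Matrix.one_apply, Equiv.coe_fn_mk]
  rfl

lemma adj0_mul (B C : Op2 N) :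
    adjPlace 3 N (B * C) 0 = adjPlace 3 N B 0 * adjPlace 3 N C 0 := by
  rw [adj0_eq, adj0_eq, adj0_eq, Matrix.submatrix_mul_equiv,
    ← Matrix.mul_kronecker_mul, one_mul]

lemma adj1_mul (B C : Op2 N) :
    adjPlace 3 N (B * C) 1 = adjPlace 3 N B 1 * adjPlace 3 N C 1 := by
  rw [adj1_eq, adj1_eq, adj1_eq, Matrix.submatrix_mul_equiv,
    ← Matrix.mul_kronecker_mul, one_mul]

lemma adj0_one : adjPlace 3 N 1 0 = 1 := by
  rw [adj0_eq, Matrix.one_kronecker_one, Matrix.submatrix_one_equiv]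

lemma adj1_one : adjPlace 3 N 1 1 = 1 := by
  rw [adj1_eq, Matrix.one_kronecker_one, Matrix.submatrix_one_equiv]

lemma adj0_add (B C : Op2 N) :
    adjPlace 3 N (B + C) 0 = adjPlace 3 N B 0 + adjPlace 3 N C 0 := by
  simp [adj0_eq, Matrix.add_kronecker, Matrix.submatrix_add]

lemma adj0_smul (c : ℂ) (B : Op2 N) :
    adjPlace 3 N (c • B) 0 = c • adjPlace 3 N B 0 := by
  simp [adj0_eq, Matrix.smul_kronecker, Matrix.submatrix_smul]

def L0 (N : ℕ) : Op2 N →ₗ[ℂ] OpN 3 N where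
  toFun B := adjPlace 3 N B 0
  map_add' := adj0_add
  map_smul' := adj0_smul

lemma L0_apply (B : Op2 N) : L0 N B = adjPlace 3 N B 0 := rfl

lemma L0cont : Continuous (L0 N) := (L0 N).continuous_of_finiteDimensional

lemma word_lemma {M : Type*} [Monoid M] (A B p q : M)
    (hp : p*p = 1) (hq : q*q = 1) (hbr : p*q*p = q*p*q)
    (hbraid : A*B*A = B*A*B) (hcomp : A*q*p = q*p*B) :
    (A*p) * (q*(A*p)*q) * (p*q*(A*p)*q*p) = (p*q*(A*p)*q*p) * (q*(A*p)*q) * (A*p) := by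
  have hp' : ∀ x, p*(p*x) = x := fun x => by rw [← mul_assoc, hp, one_mul]
  have hq' : ∀ x, q*(q*x) = x := fun x => by rw [← mul_assoc, hq, one_mul]
  have hbr' : ∀ x, p*(q*(p*x)) = q*(p*(q*x)) := fun x => by
    rw [← mul_assoc, ← mul_assoc, ← mul_assoc, ← mul_assoc, hbr]
  have h1 : A*(q*p) = q*(p*B) := by simpa [mul_assoc] using hcomp
  have hB : B = p*(q*(A*(q*p))) := by rw [h1, hq', hp']
  have hABA : ∀ x, A*(p*(q*(A*(q*(p*(A*x)))))) =
      p*(q*(A*(q*(p*(A*(p*(q*(A*(q*(p*x)))))))))) := by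
    intro x
    have h2 := congrArg (· * x) hbraid
    simp only [hB] at h2
    simpa [mul_assoc] using h2
  simp only [mul_assoc]
  conv_lhs => rw [hbr', hq', hABA, hp', hq']
  conv_rhs => rw [hbr', hq']

lemma scalar_lim : Filter.Tendsto (fun h : ℂ => h⁻¹ * (Complex.exp h - (Complex.exp h)⁻¹))
    (nhdsWithin 0 {(0:ℂ)}ᶜ) (nhds 2) := by
  have h2 : HasDerivAt (fun h : ℂ => Complex.exp (-h)) (-1) 0 := by
    simpa [Function.comp_def] using (Complex.hasDerivAt_exp (-0)).comp 0 (hasDerivAt_neg (0:ℂ))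
  have h1 : HasDerivAt Complex.exp 1 0 := by simpa using Complex.hasDerivAt_exp 0
  have hd : HasDerivAt (fun h : ℂ => Complex.exp h - Complex.exp (-h)) 2 0 := by
    have := h1.sub h2
    norm_num at this
    exact this
  rw [hasDerivAt_iff_tendsto_slope] at hd
  refine hd.congr fun h => ?_
  simp [slope_def_field, Complex.exp_neg, div_eq_inv_mul]

lemma cube_id {A : Type*} [Ring A] [Algebra ℂ A] (h : ℂ) (hh : h ≠ 0) (u v w : A) :
    (h^2)⁻¹ • ((1+h•u)*(1+h•v)*(1+h•w) - (1+h•w)*(1+h•v)*(1+h•u))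
      = (u*v + u*w + v*w - w*v - w*u - v*u) + h•(u*v*w - w*v*u) := by
  have e1 : (1+h•u)*(1+h•v)*(1+h•w) - (1+h•w)*(1+h•v)*(1+h•u)
      = h^2 • ((u*v + u*w + v*w - w*v - w*u - v*u) + h•(u*v*w - w*v*u)) := by
    simp only [mul_add, add_mul, mul_one, one_mul, smul_mul_assoc, mul_smul_comm, smul_smul,
      smul_add, smul_sub]
    module
  rw [e1, smul_smul, inv_mul_cancel₀ (pow_ne_zero 2 hh), one_smul]

end Stmt7Aux

open Stmt7Aux Filter

set_option maxHeartbeats 1000000 in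
/-- let `F` be an involutive symmetry and `h ↦ R h` a family of Hecke symmetries
with parameter `q = eʰ` compatible with `F` (for `h ≠ 0` in a neighborhood `U` of `0`), with
`R 0 = F` and `R h ∘ F = I + h r + h² s + o(h²)`.  Then the constant braided `r`-matrix `r`
satisfies `r + F r F = 2F` and the braided classical Yang–Baxter equation. -/
theorem stmt_7 (N : ℕ) (hN : 1 ≤ N) (F : Op2 N)
    (hFinv : F * F = 1)
    (hFbraid : adjPlace 3 N F 0 * adjPlace 3 N F 1 * adjPlace 3 N F 0 =
      adjPlace 3 N F 1 * adjPlace 3 N F 0 * adjPlace 3 N F 1)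
    (U : Set ℂ) (hU : U ∈ nhds 0)
    (R : ℂ → Op2 N) (hR0 : R 0 = F)
    (hq : ∀ h ∈ U, h ≠ 0 → Complex.exp h ≠ 1 ∧ Complex.exp h ≠ -1)
    (hHecke : ∀ h ∈ U, h ≠ 0 →
      (R h - Complex.exp h • 1) * (R h + (Complex.exp h)⁻¹ • 1) = 0)
    (hRbraid : ∀ h ∈ U, h ≠ 0 →
      adjPlace 3 N (R h) 0 * adjPlace 3 N (R h) 1 * adjPlace 3 N (R h) 0 =
        adjPlace 3 N (R h) 1 * adjPlace 3 N (R h) 0 * adjPlace 3 N (R h) 1)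
    (hcomp1 : ∀ h ∈ U, h ≠ 0 →
      adjPlace 3 N (R h) 0 * adjPlace 3 N F 1 * adjPlace 3 N F 0 =
        adjPlace 3 N F 1 * adjPlace 3 N F 0 * adjPlace 3 N (R h) 1)
    (hcomp2 : ∀ h ∈ U, h ≠ 0 →
      adjPlace 3 N (R h) 1 * adjPlace 3 N F 0 * adjPlace 3 N F 1 =
        adjPlace 3 N F 0 * adjPlace 3 N F 1 * adjPlace 3 N (R h) 0)
    (r s : Op2 N)
    (hexp : Filter.Tendsto
      (fun h : ℂ => (h ^ 2)⁻¹ • (R h * F - 1 - h • r - h ^ 2 • s))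
      (nhdsWithin 0 {(0 : ℂ)}ᶜ) (nhds 0)) :
    (r + F * r * F = (2 : ℂ) • F) ∧
      ((bar2 3 N F F r 1 2 * bar2 3 N F F r 1 3 - bar2 3 N F F r 1 3 * bar2 3 N F F r 1 2) +
        (bar2 3 N F F r 1 2 * bar2 3 N F F r 2 3 - bar2 3 N F F r 2 3 * bar2 3 N F F r 1 2) +
        (bar2 3 N F F r 1 3 * bar2 3 N F F r 2 3 - bar2 3 N F F r 2 3 * bar2 3 N F F r 1 3)
          = 0) := by
  classical
  set E : ℂ → Op2 N := fun h => R h * F - 1 - h • r - h ^ 2 • s with hEdef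
  set P : ℂ → Op2 N := fun h => R h * F with hPdef
  have hne : ∀ᶠ (h : ℂ) in nhdsWithin 0 {(0:ℂ)}ᶜ, h ≠ 0 := by
    filter_upwards [self_mem_nhdsWithin] with h hh
    exact hh
  have hUe : ∀ᶠ (h : ℂ) in nhdsWithin 0 {(0:ℂ)}ᶜ, h ∈ U := nhdsWithin_le_nhds hU
  have htid : Tendsto (fun h : ℂ => h) (nhdsWithin 0 {(0:ℂ)}ᶜ) (nhds 0) :=
    tendsto_id.mono_right nhdsWithin_le_nhds
  have hE2 : Tendsto (fun h => (h^2)⁻¹ • E h) (nhdsWithin 0 {(0:ℂ)}ᶜ) (nhds 0) := hexp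
  have hE1 : Tendsto (fun h => h⁻¹ • E h) (nhdsWithin 0 {(0:ℂ)}ᶜ) (nhds 0) := by
    have hbase : Tendsto (fun h : ℂ => h • ((h^2)⁻¹ • E h)) (nhdsWithin 0 {(0:ℂ)}ᶜ)
        (nhds ((0:ℂ) • (0 : Op2 N))) := htid.smul hE2
    rw [zero_smul] at hbase
    refine hbase.congr' ?_
    filter_upwards [hne] with h hh
    rw [smul_smul]
    congr 1
    rw [sq, mul_inv, ← mul_assoc, mul_inv_cancel₀ hh, one_mul]
  have hE0 : Tendsto E (nhdsWithin 0 {(0:ℂ)}ᶜ) (nhds 0) := by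
    have hbase : Tendsto (fun h : ℂ => h • (h⁻¹ • E h)) (nhdsWithin 0 {(0:ℂ)}ᶜ)
        (nhds ((0:ℂ) • (0 : Op2 N))) := htid.smul hE1
    rw [zero_smul] at hbase
    refine hbase.congr' ?_
    filter_upwards [hne] with h hh
    rw [smul_smul, mul_inv_cancel₀ hh, one_smul]
  have hPsub : ∀ h, P h - 1 = h • r + h^2 • s + E h := by
    intro h
    simp only [hEdef, hPdef]
    abel
  have hP1 : Tendsto (fun h => h⁻¹ • (P h - 1)) (nhdsWithin 0 {(0:ℂ)}ᶜ) (nhds r) := by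
    have hbase : Tendsto (fun h : ℂ => r + h • s + h⁻¹ • E h) (nhdsWithin 0 {(0:ℂ)}ᶜ)
        (nhds (r + (0:ℂ) • s + 0)) :=
      (tendsto_const_nhds.add (htid.smul tendsto_const_nhds)).add hE1
    rw [zero_smul, add_zero, add_zero] at hbase
    refine hbase.congr' ?_
    filter_upwards [hne] with h hh
    rw [hPsub, smul_add, smul_add, smul_smul, smul_smul, inv_mul_cancel₀ hh, one_smul,
      show h⁻¹ * h^2 = h from by rw [sq, ← mul_assoc, inv_mul_cancel₀ hh, one_mul]]
  have hP0 : Tendsto P (nhdsWithin 0 {(0:ℂ)}ᶜ) (nhds 1) := by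
    have hsub : Tendsto (fun h => P h - 1) (nhdsWithin 0 {(0:ℂ)}ᶜ) (nhds (0 : Op2 N)) := by
      have hbase : Tendsto (fun h : ℂ => h • (h⁻¹ • (P h - 1))) (nhdsWithin 0 {(0:ℂ)}ᶜ)
          (nhds ((0:ℂ) • r)) := htid.smul hP1
      rw [zero_smul] at hbase
      refine hbase.congr' ?_
      filter_upwards [hne] with h hh
      rw [smul_smul, mul_inv_cancel₀ hh, one_smul]
    have hadd := hsub.add (tendsto_const_nhds : Tendsto (fun _ : ℂ => (1 : Op2 N))
      (nhdsWithin 0 {(0:ℂ)}ᶜ) (nhds 1))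
    rw [zero_add] at hadd
    refine hadd.congr fun h => by abel
  have hRPF : ∀ h, R h = P h * F := by
    intro h
    rw [hPdef, mul_assoc, hFinv, mul_one]
  -- ==================== Part (i) ====================
  have part1 : r + F * r * F = (2 : ℂ) • F := by
    have hsplit : ∀ X : Op2 N, X*(F*X*F) - 1 = (X-1)*(F*X*F) + F*(X-1)*F := by
      intro X
      have hfx : F*(X-1)*F = F*X*F - 1 := by
        rw [mul_sub, sub_mul, mul_one, hFinv]
      rw [hfx]
      noncomm_ring
    have key1 : Tendsto
        (fun h => h⁻¹ • (R h * R h - 1 - (Complex.exp h - (Complex.exp h)⁻¹) • R h))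
        (nhdsWithin 0 {(0:ℂ)}ᶜ)
        (nhds (r * (F * 1 * F) + F * r * F - (2:ℂ) • (1 * F))) := by
      have hbase : Tendsto
          (fun h => (h⁻¹ • (P h - 1)) * (F * P h * F) + F * (h⁻¹ • (P h - 1)) * F
            - (h⁻¹ * (Complex.exp h - (Complex.exp h)⁻¹)) • (P h * F))
          (nhdsWithin 0 {(0:ℂ)}ᶜ)
          (nhds (r * (F * 1 * F) + F * r * F - (2:ℂ) • (1 * F))) := by
        refine Tendsto.sub (Tendsto.add ?_ ?_) ?_
        · exact hP1.mul ((tendsto_const_nhds.mul hP0).mul tendsto_const_nhds)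
        · exact (tendsto_const_nhds.mul hP1).mul tendsto_const_nhds
        · exact scalar_lim.smul (hP0.mul tendsto_const_nhds)
      refine hbase.congr fun h => ?_
      rw [hRPF h]
      rw [show P h * F * (P h * F) = P h * (F * P h * F) from by noncomm_ring]
      rw [hsplit (P h)]
      simp only [smul_sub, smul_add, smul_smul, smul_mul_assoc, mul_smul_comm, sub_mul,
        mul_sub, one_mul, mul_one]
    have hzero : Tendsto
        (fun h => h⁻¹ • (R h * R h - 1 - (Complex.exp h - (Complex.exp h)⁻¹) • R h))
        (nhdsWithin 0 {(0:ℂ)}ᶜ) (nhds 0) := by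
      refine Tendsto.congr' ?_ tendsto_const_nhds
      filter_upwards [hUe, hne] with h hu h0
      have hH := hHecke h hu h0
      have hqq : Complex.exp h * (Complex.exp h)⁻¹ = 1 := mul_inv_cancel₀ (Complex.exp_ne_zero h)
      have hqq' : (Complex.exp h)⁻¹ * Complex.exp h = 1 := inv_mul_cancel₀ (Complex.exp_ne_zero h)
      have hexp0 : R h * R h - 1 - (Complex.exp h - (Complex.exp h)⁻¹) • R h
          = (R h - Complex.exp h • 1) * (R h + (Complex.exp h)⁻¹ • 1) := by
        simp only [mul_add, sub_mul, smul_sub, smul_mul_assoc, mul_smul_comm, one_mul,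
          mul_one, smul_smul, hqq, hqq', sub_smul, one_smul]
        abel
      rw [hexp0, hH, smul_zero]
    have hval := tendsto_nhds_unique key1 hzero
    rw [show F * (1 : Op2 N) * F = 1 from by rw [mul_one, hFinv], mul_one, one_mul] at hval
    exact sub_eq_zero.mp hval
  -- ==================== Part (ii) ====================
  refine ⟨part1, ?_⟩
  set p : OpN 3 N := adjPlace 3 N F 0 with hpdef
  set qm : OpN 3 N := adjPlace 3 N F 1 with hqmdef
  have hpp : p * p = 1 := by rw [hpdef, ← adj0_mul, hFinv, adj0_one]
  have hqq : qm * qm = 1 := by rw [hqmdef, ← adj1_mul, hFinv, adj1_one]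
  set a : OpN 3 N := adjPlace 3 N r 0 with hadef
  set a2 : OpN 3 N := adjPlace 3 N s 0 with ha2def
  set XX : ℂ → OpN 3 N := fun h => adjPlace 3 N (P h) 0 with hXXdef
  set X' : ℂ → OpN 3 N := fun h => h⁻¹ • (XX h - 1) with hX'def
  have hXXsub : ∀ h, XX h - 1 = h • a + h^2 • a2 + adjPlace 3 N (E h) 0 := by
    intro h
    have hPh : P h = 1 + (h • r + h^2 • s + E h) := by rw [← hPsub]; abel
    rw [hadef, ha2def]
    simp only [hXXdef, hPh, adj0_add, adj0_one, adj0_smul]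
    abel
  have hadjE : Tendsto (fun h => h⁻¹ • adjPlace 3 N (E h) 0)
      (nhdsWithin 0 {(0:ℂ)}ᶜ) (nhds 0) := by
    have hc := ((L0cont (N := N)).tendsto 0).comp hE1
    rw [show (L0 N) (0 : Op2 N) = 0 from map_zero _] at hc
    refine hc.congr fun x => ?_
    show (L0 N) (x⁻¹ • E x) = x⁻¹ • adjPlace 3 N (E x) 0
    rw [_root_.map_smul]
    rfl
  have hX' : Tendsto X' (nhdsWithin 0 {(0:ℂ)}ᶜ) (nhds a) := by
    have hbase : Tendsto (fun h : ℂ => a + h • a2 + h⁻¹ • adjPlace 3 N (E h) 0)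
        (nhdsWithin 0 {(0:ℂ)}ᶜ) (nhds (a + (0:ℂ) • a2 + 0)) :=
      (tendsto_const_nhds.add (htid.smul tendsto_const_nhds)).add hadjE
    rw [zero_smul, add_zero, add_zero] at hbase
    refine hbase.congr' ?_
    filter_upwards [hne] with h hh
    simp only [hX'def]
    rw [hXXsub h, smul_add, smul_add, smul_smul, smul_smul, inv_mul_cancel₀ hh, one_smul,
      show h⁻¹ * h^2 = h from by rw [sq, ← mul_assoc, inv_mul_cancel₀ hh, one_mul]]
  have hY' : Tendsto (fun h => qm * X' h * qm) (nhdsWithin 0 {(0:ℂ)}ᶜ)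
      (nhds (qm * a * qm)) := (tendsto_const_nhds.mul hX').mul tendsto_const_nhds
  have hZ' : Tendsto (fun h => p * qm * X' h * qm * p) (nhdsWithin 0 {(0:ℂ)}ᶜ)
      (nhds (p * qm * a * qm * p)) :=
    (((tendsto_const_nhds.mul hX').mul tendsto_const_nhds).mul tendsto_const_nhds)
  set T : ℂ → OpN 3 N := fun h => (h^2)⁻¹ •
    (XX h * (qm * XX h * qm) * (p * qm * XX h * qm * p)
      - (p * qm * XX h * qm * p) * (qm * XX h * qm) * XX h) with hTdef
  have hT0 : Tendsto T (nhdsWithin 0 {(0:ℂ)}ᶜ) (nhds 0) := by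
    refine Tendsto.congr' ?_ tendsto_const_nhds
    filter_upwards [hUe, hne] with h hu h0
    have hw := word_lemma (adjPlace 3 N (R h) 0) (adjPlace 3 N (R h) 1) p qm hpp hqq hFbraid
      (hRbraid h hu h0) (hcomp1 h hu h0)
    have hXA : XX h = adjPlace 3 N (R h) 0 * p := by
      rw [hpdef]
      simp only [hXXdef, hPdef]
      rw [adj0_mul]
    have hTh : T h = 0 := by
      simp only [hTdef]
      rw [hXA, hw, sub_self, smul_zero]
    exact hTh.symm
  have hTlim : Tendsto T (nhdsWithin 0 {(0:ℂ)}ᶜ)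
      (nhds ((a*(qm*a*qm) + a*(p*qm*a*qm*p) + (qm*a*qm)*(p*qm*a*qm*p)
        - (p*qm*a*qm*p)*(qm*a*qm) - (p*qm*a*qm*p)*a - (qm*a*qm)*a)
        + (0:ℂ) • (a*(qm*a*qm)*(p*qm*a*qm*p) - (p*qm*a*qm*p)*(qm*a*qm)*a))) := by
    have hbase : Tendsto
        (fun h => (X' h*(qm*X' h*qm) + X' h*(p*qm*X' h*qm*p) + (qm*X' h*qm)*(p*qm*X' h*qm*p)
          - (p*qm*X' h*qm*p)*(qm*X' h*qm) - (p*qm*X' h*qm*p)*X' h - (qm*X' h*qm)*X' h)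
          + h • (X' h*(qm*X' h*qm)*(p*qm*X' h*qm*p) - (p*qm*X' h*qm*p)*(qm*X' h*qm)*X' h))
        (nhdsWithin 0 {(0:ℂ)}ᶜ)
        (nhds ((a*(qm*a*qm) + a*(p*qm*a*qm*p) + (qm*a*qm)*(p*qm*a*qm*p)
          - (p*qm*a*qm*p)*(qm*a*qm) - (p*qm*a*qm*p)*a - (qm*a*qm)*a)
          + (0:ℂ) • (a*(qm*a*qm)*(p*qm*a*qm*p) - (p*qm*a*qm*p)*(qm*a*qm)*a))) := by
      refine Tendsto.add ?_ (htid.smul ?_)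
      · exact ((((hX'.mul hY').add (hX'.mul hZ')).add (hY'.mul hZ')).sub
          (hZ'.mul hY')).sub (hZ'.mul hX') |>.sub (hY'.mul hX')
      · exact ((hX'.mul hY').mul hZ').sub ((hZ'.mul hY').mul hX')
    refine hbase.congr' ?_
    filter_upwards [hne] with h hh
    have hx : XX h = 1 + h • X' h := by
      simp only [hX'def]
      rw [smul_smul, mul_inv_cancel₀ hh, one_smul]
      abel
    have hy : qm * XX h * qm = 1 + h • (qm * X' h * qm) := by
      rw [hx]
      simp only [mul_add, add_mul, mul_one, one_mul, mul_smul_comm, smul_mul_assoc]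
      rw [hqq]
    have hz : p * qm * XX h * qm * p = 1 + h • (p * qm * X' h * qm * p) := by
      rw [hx]
      simp only [mul_add, add_mul, mul_one, one_mul, mul_smul_comm, smul_mul_assoc]
      rw [mul_assoc p qm qm, hqq, mul_one, hpp]
    show _ = T h
    simp only [hTdef]
    rw [hy, hz, hx]
    exact (cube_id h hh (X' h) (qm * X' h * qm) (p * qm * X' h * qm * p)).symm
  have hVzero := tendsto_nhds_unique hTlim hT0
  rw [zero_smul, add_zero] at hVzero
  have hr1 : List.range' 1 1 = [1] := rfl
  have hr0 : List.range 1 = [0] := rfl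
  have hbar12 : bar2 3 N F F r 1 2 = a := by
    rw [hadef]
    simp [bar2, chainC, chainD, chainCInv, chainDInv]
  have hbar13 : bar2 3 N F F r 1 3 = qm * a * qm := by
    rw [hadef, hqmdef]
    simp [bar2, chainC, chainD, chainCInv, chainDInv, hr1]
  have hbar23 : bar2 3 N F F r 2 3 = p * qm * a * qm * p := by
    rw [hadef, hqmdef, hpdef]
    simp [bar2, chainC, chainD, chainCInv, chainDInv, hr1, hr0, mul_assoc]
  rw [hbar12, hbar13, hbar23]
  have habel : a*(qm*a*qm) - (qm*a*qm)*a + (a*(p*qm*a*qm*p) - (p*qm*a*qm*p)*a)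
      + ((qm*a*qm)*(p*qm*a*qm*p) - (p*qm*a*qm*p)*(qm*a*qm))
      = a*(qm*a*qm) + a*(p*qm*a*qm*p) + (qm*a*qm)*(p*qm*a*qm*p)
        - (p*qm*a*qm*p)*(qm*a*qm) - (p*qm*a*qm*p)*a - (qm*a*qm)*a := by
    abel
  rw [habel]
  exact hVzero
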